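/- arXiv:2204.05413 — 2 statements merged into one kernel-verified Lean document; each statement's English description precedes it below -/
import Mathlib

section
/- Let A > 0, B > 0, K_P ≥ 0, K_I > 0 and r be real numbers. Suppose F, z : ℝ → ℝ are differentiable functions satisfying for all t: z'(t) = r - F(t) and F'(t) = -B·F(t) + A·(K_P·(r - F(t)) + K_I·z(t)). Then F(t) tends to r as t tends to +∞. -/
/-!
In the error `x = F - r` and its rate `y = F'` the closed loop is the damped oscillator
`x'' + b x' + c x = 0` with `b = B + A K_P > 0` and `c = A K_I > 0`. A quadratic Lyapunov function
`V(x, y)` with `c x² ≤ V` and `V' ≤ -k V` for some `k > 0` decays like `e^{-kt}`, hence `x → 0`.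
-/

open Filter Topology Real

theorem le_mul_exp_neg_of_hasDerivAt_le {V V' : ℝ → ℝ} {k : ℝ}
    (hV : ∀ t, HasDerivAt V (V' t) t) (hV' : ∀ t, V' t ≤ -k * V t) {t : ℝ} (ht : 0 ≤ t) :
    V t ≤ V 0 * exp (-k * t) := by
  have hW : ∀ s, HasDerivAt (fun s => V s * exp (k * s)) ((V' s + k * V s) * exp (k * s)) s := by
    intro s
    refine ((hV s).mul ((hasDerivAt_id s).const_mul k).exp).congr_deriv ?_
    simp only [id_eq, mul_one]
    ring
  have hanti := antitone_of_hasDerivAt_nonpos hW fun s =>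
    mul_nonpos_of_nonpos_of_nonneg (by linarith [hV' s]) (exp_pos _).le
  have hle : V t * exp (k * t) ≤ V 0 := by simpa using hanti ht
  calc V t = V t * exp (k * t) * exp (-k * t) := by
        rw [mul_assoc, ← exp_add, show k * t + -k * t = 0 by ring, exp_zero, mul_one]
    _ ≤ V 0 * exp (-k * t) := by gcongr

namespace DampedOscillator

variable {b c : ℝ}

/-- The energy `y ^ 2 + c x ^ 2` of `x'' + b x' + c x = 0` plus the cross term `b (x y + b x ^ 2 / 2)`,
which makes its derivative along solutions, `-b (c x ^ 2 + y ^ 2)`, negative definite. -/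
noncomputable def lyapunov (b c x y : ℝ) : ℝ := (c + b ^ 2 / 2) * x ^ 2 + b * x * y + y ^ 2

theorem mul_sq_le_lyapunov (x y : ℝ) : c * x ^ 2 ≤ lyapunov b c x y := by
  unfold lyapunov
  nlinarith [sq_nonneg (y + b * x / 2), sq_nonneg (b * x)]

theorem lyapunov_le (hc : 0 < c) (x y : ℝ) :
    lyapunov b c x y ≤ (2 + b ^ 2 / c) * (c * x ^ 2 + y ^ 2) := by
  have hy : 0 ≤ b ^ 2 / c * y ^ 2 := by positivity
  have hx : b ^ 2 / c * (c * x ^ 2) = b ^ 2 * x ^ 2 := by field_simp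
  unfold lyapunov
  nlinarith [sq_nonneg (y - b * x / 2), sq_nonneg (b * x), sq_nonneg x]

theorem hasDerivAt_lyapunov {x y : ℝ → ℝ} {t : ℝ} (hx : HasDerivAt x (y t) t)
    (hy : HasDerivAt y (-b * y t - c * x t) t) :
    HasDerivAt (fun s => lyapunov b c (x s) (y s)) (-b * (c * x t ^ 2 + y t ^ 2)) t := by
  unfold lyapunov
  refine ((((hx.pow 2).const_mul (c + b ^ 2 / 2)).add ((hx.const_mul b).mul hy)).add
    (hy.pow 2)).congr_deriv ?_
  push_cast
  ring

theorem tendsto_atTop_zero (hb : 0 < b) (hc : 0 < c) {x y : ℝ → ℝ}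
    (hx : ∀ t, HasDerivAt x (y t) t) (hy : ∀ t, HasDerivAt y (-b * y t - c * x t) t) :
    Tendsto x atTop (𝓝 0) := by
  set V := fun t => lyapunov b c (x t) (y t)
  set k := b / (2 + b ^ 2 / c)
  have hV' : ∀ t, -b * (c * x t ^ 2 + y t ^ 2) ≤ -k * V t := by
    intro t
    have hkV : k * V t ≤ b * (c * x t ^ 2 + y t ^ 2) :=
      calc k * V t ≤ k * ((2 + b ^ 2 / c) * (c * x t ^ 2 + y t ^ 2)) := by
            gcongr
            exact lyapunov_le hc _ _
        _ = b * (c * x t ^ 2 + y t ^ 2) := by simp only [k]; field_simp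
    linarith
  have hk : 0 < k := by positivity
  have hbound : ∀ᶠ t in atTop, x t ^ 2 ≤ V 0 * exp (-k * t) / c :=
    eventually_ge_atTop 0 |>.mono fun t ht => by
      rw [le_div_iff₀' hc]
      exact (mul_sq_le_lyapunov _ _).trans
        (le_mul_exp_neg_of_hasDerivAt_le (fun t => hasDerivAt_lyapunov (hx t) (hy t)) hV' ht)
  have hdecay : Tendsto (fun t => V 0 * exp (-k * t) / c) atTop (𝓝 0) := by
    simpa using ((tendsto_exp_atBot.comp
      (tendsto_id.const_mul_atTop_of_neg (neg_lt_zero.mpr hk))).const_mul (V 0)).div_const c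
  have hsq : Tendsto (fun t => x t ^ 2) atTop (𝓝 0) :=
    tendsto_of_tendsto_of_tendsto_of_le_of_le' tendsto_const_nhds hdecay
      (Eventually.of_forall fun t => sq_nonneg (x t)) hbound
  rw [tendsto_zero_iff_abs_tendsto_zero]
  simpa [Function.comp_def, sqrt_sq_eq_abs] using hsq.sqrt

end DampedOscillator

/-- Time-domain zero steady-state tracking error for a step reference r:
with plant F' = -B·F + A·u and PI control u = K_P·(r - F) + K_I·z,
z' = r - F, the thrust F converges to the reference r. -/
theorem pi_step_reference_tracking
    (A B K_P K_I r : ℝ) (hA : 0 < A) (hB : 0 < B) (hKP : 0 ≤ K_P) (hKI : 0 < K_I)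
    (F z : ℝ → ℝ) (hFd : Differentiable ℝ F) (hzd : Differentiable ℝ z)
    (hz : ∀ t, deriv z t = r - F t)
    (hF : ∀ t, deriv F t = -B * F t + A * (K_P * (r - F t) + K_I * z t)) :
    Filter.Tendsto F Filter.atTop (nhds r) := by
  set y := fun t => -B * F t + A * (K_P * (r - F t) + K_I * z t)
  have hFy : ∀ t, HasDerivAt F (y t) t := fun t => (hFd t).hasDerivAt.congr_deriv (hF t)
  have hzF : ∀ t, HasDerivAt z (r - F t) t := fun t => (hzd t).hasDerivAt.congr_deriv (hz t)
  have hy : ∀ t, HasDerivAt y (-(B + A * K_P) * y t - A * K_I * (F t - r)) t := fun t =>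
    (((hFy t).const_mul (-B)).add
      (((((hFy t).const_sub r).const_mul K_P).add ((hzF t).const_mul K_I)).const_mul A)).congr_deriv
      (by ring)
  rw [← tendsto_sub_nhds_zero_iff]
  exact DampedOscillator.tendsto_atTop_zero (by positivity) (mul_pos hA hKI)
    (fun t => (hFy t).sub_const r) hy
end

section
/- Let A > 0, B > 0, K_P ≥ 0, K_I > 0, r, and d be real numbers. Suppose F, z : ℝ → ℝ are differentiable functions satisfying for all t: z'(t) = r - F(t) and F'(t) = -B·F(t) + A·(K_P·(r - F(t)) + K_I·z(t)) + d. Then F(t) tends to r as t tends to +∞. -/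
/-!
After the shift `x = F - r`, `w = z + (d - B r) / (A K_I)` the closed loop becomes the homogeneous
system `x' = c w - a x`, `w' = -x` with `a = B + A K_P > 0` and `c = A K_I > 0`, i.e. the damped
oscillator `w'' + a w' + c w = 0`. A strict quadratic Lyapunov function `V` for it satisfies
`V' ≤ -κ V`, hence decays exponentially, and `x² ≤ 2 V`.
-/

open Filter Topology Real

lemma le_mul_exp_of_hasDerivAt_le_mul {V V' : ℝ → ℝ} {K : ℝ}
    (hV : ∀ t, HasDerivAt V (V' t) t) (hle : ∀ t, V' t ≤ K * V t) {t : ℝ} (ht : 0 ≤ t) :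
    V t ≤ V 0 * exp (K * t) := by
  have hW : ∀ s, HasDerivAt (fun s => V s * exp (-K * s)) ((V' s - K * V s) * exp (-K * s)) s :=
    fun s => ((hV s).mul ((hasDerivAt_id s).const_mul (-K)).exp).congr_deriv
      (by simp only [id]; ring)
  have hanti : Antitone fun s => V s * exp (-K * s) :=
    antitone_of_deriv_nonpos (fun s => (hW s).differentiableAt) fun s => by
      rw [(hW s).deriv]
      exact mul_nonpos_of_nonpos_of_nonneg (by linarith [hle s]) (exp_nonneg _)
  have hmono := hanti ht
  simp only [mul_zero, exp_zero, mul_one] at hmono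
  calc V t = V t * exp (-K * t) * exp (K * t) := by rw [mul_assoc, ← exp_add]; simp
    _ ≤ V 0 * exp (K * t) := by gcongr

lemma tendsto_zero_of_hasDerivAt_le_neg_mul {V V' : ℝ → ℝ} {κ : ℝ} (hκ : 0 < κ)
    (hV : ∀ t, HasDerivAt V (V' t) t) (hle : ∀ t, V' t ≤ -κ * V t) (hnonneg : ∀ t, 0 ≤ V t) :
    Tendsto V atTop (𝓝 0) := by
  have hexp : Tendsto (fun t => V 0 * exp (-κ * t)) atTop (𝓝 0) := by
    simpa using (tendsto_exp_atBot.comp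
      (tendsto_id.const_mul_atTop_of_neg (neg_neg_of_pos hκ))).const_mul (V 0)
  refine tendsto_of_tendsto_of_tendsto_of_le_of_le' tendsto_const_nhds hexp
    (Eventually.of_forall hnonneg) ?_
  filter_upwards [eventually_ge_atTop 0] with t ht
  exact le_mul_exp_of_hasDerivAt_le_mul hV hle ht

/-- The energy `x² + c w²` of `w'' + a w' + c w = 0` (where `x = -w'`) plus `a / 2` times the
cross term `a w² - 2 x w`, which turns the dissipation `-2 a x²` into `-a x² - a c w²`. -/
noncomputable def piLyapunov (a c x w : ℝ) : ℝ := x ^ 2 - a * x * w + (c + a ^ 2 / 2) * w ^ 2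

lemma sq_le_two_mul_piLyapunov {c : ℝ} (hc : 0 ≤ c) (a x w : ℝ) :
    x ^ 2 ≤ 2 * piLyapunov a c x w := by
  unfold piLyapunov
  nlinarith [sq_nonneg (x - a * w), sq_nonneg w]

lemma piLyapunov_dissipation_le {a c : ℝ} (ha : 0 < a) (hc : 0 < c) (x w : ℝ) :
    -a * x ^ 2 - a * c * w ^ 2 ≤ -(a * c / (2 * (c + a ^ 2))) * piLyapunov a c x w := by
  unfold piLyapunov
  have hpos : 0 < 2 * (c + a ^ 2) := by positivity
  have : a * c / (2 * (c + a ^ 2)) * (x ^ 2 - a * x * w + (c + a ^ 2 / 2) * w ^ 2)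
      ≤ a * x ^ 2 + a * c * w ^ 2 := by
    rw [div_mul_eq_mul_div, div_le_iff₀ hpos]
    nlinarith [mul_nonneg (mul_nonneg ha.le hc.le) (sq_nonneg (x + a * w)),
      mul_nonneg (mul_nonneg ha.le hc.le) (sq_nonneg x), mul_nonneg (pow_nonneg ha.le 3) (sq_nonneg x),
      mul_nonneg (mul_nonneg ha.le (mul_nonneg hc.le hc.le)) (sq_nonneg w)]
  linarith

section PILoop

variable {a c : ℝ} {x w : ℝ → ℝ}

lemma hasDerivAt_piLyapunov {t : ℝ} (hx : HasDerivAt x (c * w t - a * x t) t)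
    (hw : HasDerivAt w (-x t) t) :
    HasDerivAt (fun s => piLyapunov a c (x s) (w s)) (-a * x t ^ 2 - a * c * w t ^ 2) t := by
  unfold piLyapunov
  exact (((hx.pow 2).sub ((hx.const_mul a).mul hw)).add ((hw.pow 2).const_mul _)).congr_deriv
    (by ring)

theorem tendsto_zero_of_piLoop (ha : 0 < a) (hc : 0 < c)
    (hx : ∀ t, HasDerivAt x (c * w t - a * x t) t) (hw : ∀ t, HasDerivAt w (-x t) t) :
    Tendsto x atTop (𝓝 0) := by
  have hV : Tendsto (fun t => piLyapunov a c (x t) (w t)) atTop (𝓝 0) :=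
    tendsto_zero_of_hasDerivAt_le_neg_mul (by positivity)
      (fun t => hasDerivAt_piLyapunov (hx t) (hw t)) (fun t => piLyapunov_dissipation_le ha hc _ _)
      (fun t => by nlinarith [sq_le_two_mul_piLyapunov hc.le a (x t) (w t), sq_nonneg (x t)])
  have hsqrt : Tendsto (fun t => √(2 * piLyapunov a c (x t) (w t))) atTop (𝓝 0) := by
    simpa using (hV.const_mul 2).sqrt
  refine squeeze_zero_norm (fun t => ?_) hsqrt
  rw [Real.norm_eq_abs, ← Real.sqrt_sq_eq_abs]
  exact Real.sqrt_le_sqrt (sq_le_two_mul_piLyapunov hc.le a (x t) (w t))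

end PILoop

/-- Constant-disturbance rejection by integral action: with plant
F' = -B·F + A·u + d, PI control u = K_P·(r - F) + K_I·z, z' = r - F,
the thrust F converges to the reference r. -/
theorem pi_step_disturbance_rejection
    (A B K_P K_I r d : ℝ) (hA : 0 < A) (hB : 0 < B) (hKP : 0 ≤ K_P) (hKI : 0 < K_I)
    (F z : ℝ → ℝ) (hFd : Differentiable ℝ F) (hzd : Differentiable ℝ z)
    (hz : ∀ t, deriv z t = r - F t)
    (hF : ∀ t, deriv F t = -B * F t + A * (K_P * (r - F t) + K_I * z t) + d) :
    Filter.Tendsto F Filter.atTop (nhds r) := by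
  have hc : 0 < A * K_I := mul_pos hA hKI
  let w : ℝ → ℝ := fun t => z t + (d - B * r) / (A * K_I)
  have hx : ∀ t, HasDerivAt (fun s => F s - r)
      (A * K_I * w t - (B + A * K_P) * (F t - r)) t := fun t =>
    ((hFd t).hasDerivAt.sub_const r).congr_deriv
      (by rw [hF t, mul_add (A * K_I), mul_div_cancel₀ _ hc.ne']; ring)
  have hw : ∀ t, HasDerivAt w (-(F t - r)) t := fun t =>
    ((hzd t).hasDerivAt.add_const _).congr_deriv (by rw [hz t]; ring)
  simpa using (tendsto_zero_of_piLoop (by positivity) hc hx hw).add_const r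
end
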